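/- Let (Z, d) be a separable metric space, μ a Borel probability measure on Z with nonempty support S, and δ > 0. Suppose T ⊆ S is a nonempty finite set such that the open balls B(t, δ/2) for t ∈ T cover S, and suppose f > 0 satisfies μ(B(t, δ/2)) ≥ f for every t ∈ T. Let X_1, …, X_n be independent random variables each with distribution μ. Then P( d_H({X_1, …, X_n}, S) > δ ) ≤ |T|·(1 − f)^n ≤ |T|·e^{−n·f}, where d_H denotes the Hausdorff distance. -/

import Mathlib

open MeasureTheory ProbabilityTheory Metric

/-- Sample-covering bound: if the balls `B(t, δ/2)`, `t ∈ T ⊆ S = supp μ`, cover `S` and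
each has mass at least `f > 0`, then the probability that `n` i.i.d. samples from `μ`
stay at Hausdorff distance more than `δ` from `S` is at most `|T| (1-f)ⁿ ≤ |T| e^{-n f}`. -/
theorem sample_covering_bound
    {Z : Type*} [MetricSpace Z] [MeasurableSpace Z] [BorelSpace Z]
    [TopologicalSpace.SeparableSpace Z]
    (μ : Measure Z) [IsProbabilityMeasure μ]
    (S : Set Z) (hS : S = {z : Z | ∀ r : ℝ, 0 < r → 0 < μ (Metric.ball z r)})
    (hSne : S.Nonempty)
    (δ : ℝ) (hδ : 0 < δ)
    (T : Finset Z) (hTS : (T : Set Z) ⊆ S) (hTne : T.Nonempty)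
    (hcover : S ⊆ ⋃ t ∈ T, Metric.ball t (δ / 2))
    (f : ℝ) (hf : 0 < f)
    (hmass : ∀ t ∈ T, ENNReal.ofReal f ≤ μ (Metric.ball t (δ / 2)))
    {Ω : Type*} {mΩ : MeasurableSpace Ω} (P : Measure Ω) [IsProbabilityMeasure P]
    (n : ℕ) (X : Fin n → Ω → Z)
    (hmeasX : ∀ i, Measurable (X i))
    (hindep : iIndepFun X P)
    (hdist : ∀ i, Measure.map (X i) P = μ) :
    P {ω | δ < Metric.hausdorffDist (Set.range fun i => X i ω) S} ≤
        ENNReal.ofReal ((T.card : ℝ) * (1 - f) ^ n) ∧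
      (T.card : ℝ) * (1 - f) ^ n ≤ (T.card : ℝ) * Real.exp (-(n : ℝ) * f) := by
  haveI : SecondCountableTopology Z := UniformSpace.secondCountable_of_separable Z
  obtain ⟨t₀, ht₀⟩ := hTne
  -- f ≤ 1
  have hf1 : f ≤ 1 := by
    have h := (hmass t₀ ht₀).trans (prob_le_one (α := Z) (μ := μ))
    rw [show (1 : ENNReal) = ENNReal.ofReal 1 by simp] at h
    exact (ENNReal.ofReal_le_ofReal_iff zero_le_one).mp h
  have h0 : (0 : ℝ) ≤ 1 - f := by linarith
  constructor
  · -- the complement of S is open and μ-null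
    have hSmem : ∀ z, z ∈ S ↔ ∀ r : ℝ, 0 < r → 0 < μ (Metric.ball z r) := by
      intro z; rw [hS]; rfl
    have hSco : IsOpen Sᶜ := by
      rw [isOpen_iff]
      intro z hz
      rw [Set.mem_compl_iff, hSmem] at hz
      push_neg at hz
      obtain ⟨r, hr, hr0⟩ := hz
      refine ⟨r / 2, by linarith, fun y hy => ?_⟩
      rw [Set.mem_compl_iff, hSmem]
      push_neg
      refine ⟨r / 2, by linarith, le_trans (measure_mono ?_) hr0⟩
      intro w hw
      calc dist w z ≤ dist w y + dist y z := dist_triangle _ _ _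
        _ < r / 2 + r / 2 := add_lt_add hw hy
        _ = r := by ring
    have hSnull : μ Sᶜ = 0 := by
      apply measure_null_of_locally_null
      intro z hz
      rw [Set.mem_compl_iff, hSmem] at hz
      push_neg at hz
      obtain ⟨r, hr, hr0⟩ := hz
      exact ⟨Metric.ball z r, nhdsWithin_le_nhds (Metric.ball_mem_nhds z hr),
        le_antisymm hr0 zero_le⟩
    -- bad events
    set A : Z → Set Ω := fun t => ⋂ i, (X i) ⁻¹' (Metric.ball t (δ / 2))ᶜ with hA
    set N : Set Ω := ⋃ i, (X i) ⁻¹' Sᶜ with hN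
    have hNnull : P N = 0 := by
      apply measure_iUnion_null
      intro i
      rw [← Measure.map_apply (hmeasX i) hSco.measurableSet, hdist i, hSnull]
    -- inclusion
    have hincl : {ω | δ < Metric.hausdorffDist (Set.range fun i => X i ω) S}
        ⊆ (⋃ t ∈ T, A t) ∪ N := by
      intro ω hω
      by_cases hωN : ω ∈ N
      · exact Or.inr hωN
      refine Or.inl ?_
      have hmemS : ∀ i, X i ω ∈ S := by
        intro i
        by_contra h
        exact hωN (Set.mem_iUnion.mpr ⟨i, h⟩)
      by_contra hc
      simp only [Set.mem_iUnion, hA, Set.mem_iInter, Set.mem_preimage, Set.mem_compl_iff,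
        not_exists, not_forall, not_not] at hc
      obtain ⟨i₀, hi₀⟩ := hc t₀ ht₀
      have hle : Metric.hausdorffDist (Set.range fun i => X i ω) S ≤ δ := by
        apply Metric.hausdorffDist_le_of_mem_dist hδ.le
        · rintro x ⟨i, rfl⟩
          exact ⟨X i ω, hmemS i, by simp [hδ.le]⟩
        · intro y hy
          obtain ⟨t, htT, hyt⟩ := Set.mem_iUnion₂.mp (hcover hy)
          obtain ⟨i, hi⟩ := hc t htT
          refine ⟨X i ω, ⟨i, rfl⟩, ?_⟩
          calc dist y (X i ω) ≤ dist y t + dist t (X i ω) := dist_triangle _ _ _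
            _ ≤ δ / 2 + δ / 2 := by
                have h1 := mem_ball.mp hyt
                have h2 := mem_ball.mp hi
                rw [dist_comm t (X i ω)]
                exact add_le_add h1.le h2.le
            _ = δ := by ring
      exact absurd hle (not_le.mpr hω)
    -- bound each bad event
    have hAt : ∀ t ∈ T, P (A t) ≤ ENNReal.ofReal ((1 - f) ^ n) := by
      intro t htT
      have hprod : P (A t) = ∏ i, P ((X i) ⁻¹' (Metric.ball t (δ / 2))ᶜ) := by
        apply hindep.meas_iInter
        intro i
        exact ⟨(Metric.ball t (δ / 2))ᶜ, measurableSet_ball.compl, rfl⟩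
      rw [hprod]
      have hone : ∀ i : Fin n, P ((X i) ⁻¹' (Metric.ball t (δ / 2))ᶜ)
          ≤ ENNReal.ofReal (1 - f) := by
        intro i
        rw [Set.preimage_compl,
          prob_compl_eq_one_sub (measurableSet_ball.preimage (hmeasX i)),
          ← Measure.map_apply (hmeasX i) measurableSet_ball, hdist i,
          ENNReal.ofReal_sub 1 hf.le, ENNReal.ofReal_one]
        exact tsub_le_tsub_left (hmass t htT) 1
      calc ∏ i, P ((X i) ⁻¹' (Metric.ball t (δ / 2))ᶜ)
          ≤ ∏ _i : Fin n, ENNReal.ofReal (1 - f) :=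
            Finset.prod_le_prod' fun i _ => hone i
        _ = ENNReal.ofReal ((1 - f) ^ n) := by
            rw [Finset.prod_const, Finset.card_univ, Fintype.card_fin,
              ENNReal.ofReal_pow h0]
    calc P {ω | δ < Metric.hausdorffDist (Set.range fun i => X i ω) S}
        ≤ P ((⋃ t ∈ T, A t) ∪ N) := measure_mono hincl
      _ ≤ P (⋃ t ∈ T, A t) + P N := measure_union_le _ _
      _ = P (⋃ t ∈ T, A t) := by rw [hNnull, add_zero]
      _ ≤ ∑ t ∈ T, P (A t) := measure_biUnion_finset_le _ _
      _ ≤ ∑ _t ∈ T, ENNReal.ofReal ((1 - f) ^ n) := Finset.sum_le_sum hAt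
      _ = ENNReal.ofReal ((T.card : ℝ) * (1 - f) ^ n) := by
          rw [Finset.sum_const, nsmul_eq_mul, ENNReal.ofReal_mul (by positivity),
            ENNReal.ofReal_natCast]
  · apply mul_le_mul_of_nonneg_left _ (Nat.cast_nonneg _)
    have h1 : 1 - f ≤ Real.exp (-f) := by
      have := Real.add_one_le_exp (-f); linarith
    calc (1 - f) ^ n ≤ Real.exp (-f) ^ n := pow_le_pow_left₀ h0 h1 n
      _ = Real.exp (-(n : ℝ) * f) := by
          rw [← Real.exp_nat_mul]; ring_nf
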